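/- arXiv:1209.3687 — 2 statements merged into one kernel-verified Lean document; each statement's English description precedes it below -/
import Mathlib

section
/- Let X, Y be Hilbert spaces, A ∈ L(X), C ∈ L(X,Y), and suppose there exists H ∈ L(X) with H ≥ A*HA ≥ 0 and Γ_{n,A}[H] ≥ C*C. Then the series Σ_{j=0}^{∞} C(n+j-1, j) A^{*j} C* C A^j converges in the strong operator topology to a bounded positive semidefinite operator G with G ≤ H. -/
/-!
Fix `x` and put `f j = re ⟪H (Aʲ x), Aʲ x⟫`. Since `Γ_{k,A}[H] = (1 - L)ᵏ H` for `L T = A* T A`,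
the quadratic form of `Γ_{k,A}[H]` along the orbit `Aʲ x` is the `k`-th iterated difference
`Δᵏ f`, where `Δ f j = f j - f (j + 1)`. The hypotheses say that `f` is nonnegative and
nonincreasing (hence bounded) and that `Δⁿ f j ≥ ‖C Aʲ x‖² ≥ 0`. A convex sequence bounded above
is nonincreasing, so nonnegativity descends from `Δⁿ f` to every `Δᵏ f` with `k ≤ n`; Abel
summation and the hockey-stick identity then give `∑_{j<N} C(n+j-1, j) Δⁿ f j ≤ f 0`.
Hence the partial sums of the gramian increase and are bounded by `H` in the Loewner order, and
such a sequence converges strongly: `‖(S_M - S_N) x‖² ≤ ‖H - S_0‖ re ⟪(S_M - S_N) x, x⟫`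
makes `S_N x` a Cauchy sequence.
-/

open ContinuousLinearMap Filter

/-- `Γ_{n,A}[H] = Σ_{j=0}^n (-1)^j C(n,j) A^{*j} H A^j`. -/
noncomputable def Gamma {X : Type*} [NormedAddCommGroup X] [InnerProductSpace ℂ X]
    [CompleteSpace X] (A H : X →L[ℂ] X) (k : ℕ) : X →L[ℂ] X :=
  ∑ j ∈ Finset.range (k + 1),
    ((-1 : ℂ) ^ j * (Nat.choose k j : ℂ)) • (((adjoint A) ^ j) ∘L H ∘L (A ^ j))

open RCLike
open scoped InnerProductSpace ComplexOrder

/-- The negative of `fwdDiff 1 f`; with this sign `Γ_{k,A}` corresponds to `negDiff^[k]`. -/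
def negDiff (f : ℕ → ℝ) (j : ℕ) : ℝ := f j - f (j + 1)

lemma abs_negDiff_iterate_le {f : ℕ → ℝ} {M : ℝ} (hf : ∀ j, |f j| ≤ M) (k j : ℕ) :
    |negDiff^[k] f j| ≤ 2 ^ k * M := by
  induction k generalizing j with
  | zero => simpa using hf j
  | succ k ih =>
    rw [Function.iterate_succ_apply', negDiff, pow_succ]
    linarith [abs_sub (negDiff^[k] f j) (negDiff^[k] f (j + 1)), ih j, ih (j + 1)]

lemma negDiff_nonneg_of_le {g : ℕ → ℝ} {M : ℝ} (hg : ∀ j, g j ≤ M)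
    (hconv : ∀ j, 0 ≤ negDiff (negDiff g) j) (j : ℕ) : 0 ≤ negDiff g j := by
  have hanti : Antitone (negDiff g) := antitone_nat_of_succ_le fun i => by
    simpa [negDiff] using hconv i
  have hdrop : ∀ m : ℕ, g j - g (j + m) ≤ m * negDiff g j := by
    intro m
    induction m with
    | zero => simp
    | succ m ih =>
      have := hanti (Nat.le_add_right j m)
      simp only [negDiff] at this ih ⊢
      push_cast
      rw [← add_assoc]
      linarith
  by_contra! hneg
  obtain ⟨m, hm⟩ := exists_nat_gt ((M - g j) / -negDiff g j)
  rw [div_lt_iff₀ (by linarith)] at hm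
  linarith [hdrop m, hg (j + m)]

lemma negDiff_iterate_nonneg {f : ℕ → ℝ} {M : ℝ} {n : ℕ} (hf : ∀ j, |f j| ≤ M)
    (hf₀ : ∀ j, 0 ≤ f j) (hn : ∀ j, 0 ≤ negDiff^[n] f j) {k : ℕ} (hk : k ≤ n) (j : ℕ) :
    0 ≤ negDiff^[k] f j := by
  revert j
  induction hk using Nat.decreasingInduction with
  | self => exact hn
  | of_succ k _ ih =>
    cases k with
    | zero => exact hf₀
    | succ k =>
      rw [Function.iterate_succ_apply']
      refine negDiff_nonneg_of_le (M := 2 ^ k * M)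
        (fun i => (le_abs_self _).trans (abs_negDiff_iterate_le hf k i)) fun i => ?_
      simpa only [Function.iterate_succ_apply'] using ih i

lemma sum_range_partialSum_mul_negDiff (a v : ℕ → ℝ) (N : ℕ) :
    ∑ j ∈ Finset.range N, (∑ i ∈ Finset.range (j + 1), a i) * negDiff v j =
      ∑ i ∈ Finset.range N, a i * (v i - v N) := by
  induction N with
  | zero => simp
  | succ N ih =>
    rw [Finset.sum_range_succ, ih, Finset.sum_range_succ a,
      Finset.sum_range_succ (fun i => a i * (v i - v (N + 1))), negDiff]
    have : ∑ i ∈ Finset.range N, a i * (v i - v (N + 1)) =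
        ∑ i ∈ Finset.range N, (a i * (v i - v N) + a i * (v N - v (N + 1))) :=
      Finset.sum_congr rfl fun i _ => by ring
    rw [this, Finset.sum_add_distrib, ← Finset.sum_mul]
    ring

lemma multichoose_succ_eq_sum (n j : ℕ) :
    (n + 1).multichoose j = ∑ i ∈ Finset.range (j + 1), n.multichoose i := by
  rw [Nat.sum_range_multichoose, Nat.multichoose_eq, show n + 1 + j - 1 = j + n by omega,
    Nat.choose_symm_add]

theorem sum_multichoose_mul_negDiff_iterate_le {f : ℕ → ℝ} (n : ℕ)
    (hf : ∀ k ≤ n, ∀ j, 0 ≤ negDiff^[k] f j) (N : ℕ) :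
    ∑ j ∈ Finset.range N, (n.multichoose j : ℝ) * negDiff^[n] f j ≤ f 0 := by
  induction n with
  | zero =>
    cases N with
    | zero => simpa using hf 0 le_rfl 0
    | succ N => simp [Finset.sum_range_succ', Nat.multichoose_zero_succ]
  | succ n ih =>
    calc ∑ j ∈ Finset.range N, ((n + 1).multichoose j : ℝ) * negDiff^[n + 1] f j
        = ∑ i ∈ Finset.range N, (n.multichoose i : ℝ) * (negDiff^[n] f i - negDiff^[n] f N) := by
          simp only [multichoose_succ_eq_sum, Nat.cast_sum, Function.iterate_succ_apply']
          exact sum_range_partialSum_mul_negDiff _ _ N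
      _ ≤ ∑ i ∈ Finset.range N, (n.multichoose i : ℝ) * negDiff^[n] f i := by
          gcongr with i
          linarith [hf n (by omega) N]
      _ ≤ f 0 := ih fun k hk => hf k (by omega)

namespace ContinuousLinearMap

section RCLike

variable {𝕜 E : Type*} [RCLike 𝕜] [NormedAddCommGroup E] [InnerProductSpace 𝕜 E]

lemma IsPositive.of_tendsto {T : ℕ → E →L[𝕜] E} {G : E →L[𝕜] E}
    (hT : ∀ᶠ N in atTop, (T N).IsPositive)
    (hG : ∀ x, Tendsto (fun N => T N x) atTop (nhds (G x))) : G.IsPositive := by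
  refine ⟨fun x y => ?_, fun x => ?_⟩
  · refine tendsto_nhds_unique ((hG x).inner tendsto_const_nhds) ?_
    refine (tendsto_const_nhds.inner (hG y)).congr' ?_
    filter_upwards [hT] with N hN using (hN.isSymmetric x y).symm
  · refine ge_of_tendsto ((continuous_re.tendsto _).comp ((hG x).inner tendsto_const_nhds)) ?_
    filter_upwards [hT] with N hN using hN.re_inner_nonneg_left x

lemma re_inner_apply_le_of_le {S T : E →L[𝕜] E} (h : S ≤ T) (x : E) :
    re ⟪S x, x⟫_𝕜 ≤ re ⟪T x, x⟫_𝕜 := by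
  have := IsPositive.re_inner_nonneg_left h x
  rwa [sub_apply, inner_sub_left, map_sub, sub_nonneg] at this

lemma le_of_re_inner_le [CompleteSpace E] {S T : E →L[𝕜] E} (hS : IsSelfAdjoint S)
    (hT : IsSelfAdjoint T) (h : ∀ x, re ⟪S x, x⟫_𝕜 ≤ re ⟪T x, x⟫_𝕜) : S ≤ T := by
  refine isPositive_def'.2 ⟨hT.sub hS, fun x => ?_⟩
  rw [reApplyInnerSelf_apply, sub_apply, inner_sub_left, map_sub, sub_nonneg]
  exact h x

end RCLike

variable {X : Type*} [NormedAddCommGroup X] [InnerProductSpace ℂ X] [CompleteSpace X]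

lemma IsPositive.norm_apply_sq_le {T : X →L[ℂ] X} (hT : T.IsPositive) (x : X) :
    ‖T x‖ ^ 2 ≤ ‖T‖ * re ⟪T x, x⟫_ℂ := by
  obtain ⟨b, rfl⟩ := CStarAlgebra.nonneg_iff_eq_star_mul_self.mp ((nonneg_iff_isPositive T).2 hT)
  have hnorm : ‖adjoint b (b x)‖ ≤ ‖b‖ * ‖b x‖ := by
    simpa using (adjoint b).le_opNorm (b x)
  have hform : re ⟪adjoint b (b x), x⟫_ℂ = ‖b x‖ ^ 2 := by
    rw [adjoint_inner_left, inner_self_eq_norm_sq]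
  rw [CStarRing.norm_star_mul_self, mul_apply_eq_comp, star_eq_adjoint, hform]
  calc ‖adjoint b (b x)‖ ^ 2 ≤ (‖b‖ * ‖b x‖) ^ 2 := by gcongr
    _ = ‖b‖ * ‖b‖ * ‖b x‖ ^ 2 := by ring

lemma cauchySeq_apply_of_monotone_of_le {S : ℕ → X →L[ℂ] X} {B : X →L[ℂ] X} (hS : Monotone S)
    (hSB : ∀ N, S N ≤ B) (x : X) : CauchySeq fun N => S N x := by
  set a : ℕ → ℝ := fun N => re ⟪S N x, x⟫_ℂ
  set K := ‖B - S 0‖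
  have hgap : ∀ {N M}, N ≤ M → ‖S M x - S N x‖ ^ 2 ≤ K * (a M - a N) := by
    intro N M hNM
    have hD : 0 ≤ S M - S N := sub_nonneg.2 (hS hNM)
    have hDK : ‖S M - S N‖ ≤ K :=
      CStarAlgebra.norm_le_norm_of_nonneg_of_le hD (sub_le_sub (hSB M) (hS (Nat.zero_le N)))
    have hform : a M - a N = re ⟪(S M - S N) x, x⟫_ℂ := by
      simp only [a, sub_apply, inner_sub_left, map_sub]
    rw [← sub_apply, hform]
    exact (((nonneg_iff_isPositive _).1 hD).norm_apply_sq_le x).trans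
      (mul_le_mul_of_nonneg_right hDK (((nonneg_iff_isPositive _).1 hD).re_inner_nonneg_left x))
  have ha : CauchySeq a := by
    refine (tendsto_atTop_ciSup (fun N M h => ?_) ⟨re ⟪B x, x⟫_ℂ, ?_⟩).cauchySeq
    · exact re_inner_apply_le_of_le (hS h) x
    · rintro _ ⟨N, rfl⟩
      exact re_inner_apply_le_of_le (hSB N) x
  rw [Metric.cauchySeq_iff'] at ha ⊢
  intro ε hε
  obtain ⟨N, hN⟩ := ha (ε ^ 2 / (K + 1)) (by positivity)
  refine ⟨N, fun M hM => ?_⟩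
  have h1 := hgap hM
  have h2 := hN M hM
  rw [Real.dist_eq, abs_lt, lt_div_iff₀ (by positivity)] at h2
  rw [dist_eq_norm]
  refine lt_of_pow_lt_pow_left₀ 2 hε.le ?_
  nlinarith [norm_nonneg (B - S 0)]

theorem exists_tendsto_of_monotone_of_le {S : ℕ → X →L[ℂ] X} {B : X →L[ℂ] X} (hS : Monotone S)
    (hSB : ∀ N, S N ≤ B) :
    ∃ G : X →L[ℂ] X, (∀ N, S N ≤ G) ∧ G ≤ B ∧
      ∀ x, Tendsto (fun N => S N x) atTop (nhds (G x)) := by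
  choose L hL using fun x =>
    cauchySeq_tendsto_of_complete (cauchySeq_apply_of_monotone_of_le hS hSB x)
  let G := continuousLinearMapOfTendsto S (tendsto_pi_nhds.2 hL)
  have hG : ∀ x, Tendsto (fun N => S N x) atTop (nhds (G x)) := hL
  refine ⟨G, fun N => ?_, ?_, hG⟩
  · refine IsPositive.of_tendsto (T := fun M => S M - S N) ?_ fun x => (hG x).sub_const _
    filter_upwards [eventually_ge_atTop N] with M hM using hS hM
  · exact IsPositive.of_tendsto (T := fun M => B - S M) (.of_forall hSB)
      fun x => tendsto_const_nhds.sub (hG x)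

end ContinuousLinearMap

lemma mulLeftRight_pow_apply {R A : Type*} [CommSemiring R] [Semiring A] [Algebra R A]
    (a b x : A) (j : ℕ) : (LinearMap.mulLeftRight R (a, b) ^ j) x = a ^ j * x * b ^ j := by
  induction j with
  | zero => simp
  | succ j ih =>
    rw [pow_succ', Module.End.mul_apply, ih, LinearMap.mulLeftRight_apply, pow_succ', pow_succ]
    simp only [mul_assoc]

section Gramian

variable {X : Type*} [NormedAddCommGroup X] [InnerProductSpace ℂ X] [CompleteSpace X]

lemma Gamma_eq_pow_apply (A H : X →L[ℂ] X) (k : ℕ) :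
    Gamma A H k = ((1 - LinearMap.mulLeftRight ℂ (adjoint A, A)) ^ k) H := by
  rw [sub_eq_neg_add, (Commute.one_right _).add_pow, Gamma, LinearMap.sum_apply]
  refine Finset.sum_congr rfl fun j _ => ?_
  rw [one_pow, mul_one, ← neg_one_smul ℂ (LinearMap.mulLeftRight ℂ _), smul_pow,
    Module.End.mul_apply, Module.End.natCast_apply, LinearMap.smul_apply, map_nsmul,
    mulLeftRight_pow_apply, mul_smul, ← Nat.cast_smul_eq_nsmul ℂ, mul_def, mul_def]
  rfl

lemma Gamma_succ (A H : X →L[ℂ] X) (k : ℕ) :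
    Gamma A H (k + 1) = Gamma A H k - adjoint A ∘L Gamma A H k ∘L A := by
  rw [Gamma_eq_pow_apply, Gamma_eq_pow_apply, pow_succ', Module.End.mul_apply,
    LinearMap.sub_apply, Module.End.one_apply, LinearMap.mulLeftRight_apply]
  rfl

noncomputable def orbitForm (A T : X →L[ℂ] X) (x : X) (j : ℕ) : ℝ := re ⟪T ((A ^ j) x), (A ^ j) x⟫_ℂ

lemma orbitForm_sub_adjoint_comp (A T : X →L[ℂ] X) (x : X) :
    orbitForm A (T - adjoint A ∘L T ∘L A) x = negDiff (orbitForm A T x) := by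
  funext j
  simp only [orbitForm, negDiff, sub_apply, comp_apply, inner_sub_left, map_sub,
    adjoint_inner_left, pow_succ', mul_apply_eq_comp]

lemma orbitForm_Gamma (A H : X →L[ℂ] X) (x : X) (k : ℕ) :
    orbitForm A (Gamma A H k) x = negDiff^[k] (orbitForm A H x) := by
  induction k with
  | zero => simp [Gamma_eq_pow_apply]
  | succ k ih => rw [Gamma_succ, orbitForm_sub_adjoint_comp, ih, Function.iterate_succ_apply']

lemma re_inner_adjoint_pow_comp_apply (A P : X →L[ℂ] X) (x : X) (j : ℕ) :
    re ⟪((adjoint A ^ j) ∘L P ∘L (A ^ j)) x, x⟫_ℂ = orbitForm A P x j := by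
  rw [← star_eq_adjoint, ← star_pow, star_eq_adjoint, comp_apply, adjoint_inner_left]
  rfl

lemma isPositive_adjoint_pow_comp {P : X →L[ℂ] X} (hP : P.IsPositive) (A : X →L[ℂ] X) (j : ℕ) :
    ((adjoint A ^ j) ∘L P ∘L (A ^ j)).IsPositive := by
  rw [← star_eq_adjoint, ← star_pow, star_eq_adjoint]
  exact hP.adjoint_conj _

/-- With `P = C* C` this is the `N`-th partial sum of the `n`-observability gramian of `(C, A)`;
note `n.multichoose j = C(n+j-1, j)`. -/
noncomputable def gramianPartialSum (n : ℕ) (A P : X →L[ℂ] X) (N : ℕ) : X →L[ℂ] X :=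
  ∑ j ∈ Finset.range N, (n.multichoose j : ℂ) • ((adjoint A ^ j) ∘L P ∘L (A ^ j))

lemma isPositive_gramianPartialSum {P : X →L[ℂ] X} (hP : P.IsPositive) (n : ℕ) (A : X →L[ℂ] X)
    (N : ℕ) : (gramianPartialSum n A P N).IsPositive :=
  isPositive_sum _ fun j _ => (isPositive_adjoint_pow_comp hP A j).smul_of_nonneg (by positivity)

lemma monotone_gramianPartialSum {P : X →L[ℂ] X} (hP : P.IsPositive) (n : ℕ) (A : X →L[ℂ] X) :
    Monotone (gramianPartialSum n A P) := by
  refine monotone_nat_of_le_succ fun N => ?_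
  unfold gramianPartialSum
  rw [Finset.sum_range_succ, le_add_iff_nonneg_right, nonneg_iff_isPositive]
  exact (isPositive_adjoint_pow_comp hP A N).smul_of_nonneg (by positivity)

lemma re_inner_gramianPartialSum_apply (n : ℕ) (A P : X →L[ℂ] X) (N : ℕ) (x : X) :
    re ⟪gramianPartialSum n A P N x, x⟫_ℂ =
      ∑ j ∈ Finset.range N, (n.multichoose j : ℝ) * orbitForm A P x j := by
  simp [gramianPartialSum, sum_apply, ← re_inner_adjoint_pow_comp_apply, mul_comm]

theorem gramianPartialSum_le {n : ℕ} {A H P : X →L[ℂ] X} (hP : P.IsPositive)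
    (h1 : (H - adjoint A ∘L H ∘L A).IsPositive) (h2 : (adjoint A ∘L H ∘L A).IsPositive)
    (h3 : P ≤ Gamma A H n) (N : ℕ) : gramianPartialSum n A P N ≤ H := by
  have hH : H.IsPositive := by simpa using h1.add h2
  refine le_of_re_inner_le (isPositive_gramianPartialSum hP n A N).isSelfAdjoint
    hH.isSelfAdjoint fun x => ?_
  set f := orbitForm A H x
  have hf₀ : ∀ j, 0 ≤ f j := fun j => hH.re_inner_nonneg_left _
  have hf : ∀ j, |f j| ≤ f 0 := by
    have hanti : Antitone f := antitone_nat_of_succ_le fun j => by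
      have := h1.re_inner_nonneg_left ((A ^ j) x)
      rwa [← orbitForm, orbitForm_sub_adjoint_comp, negDiff, sub_nonneg] at this
    exact fun j => (abs_of_nonneg (hf₀ j)).trans_le (hanti (Nat.zero_le j))
  have hPf : ∀ j, orbitForm A P x j ≤ negDiff^[n] f j := fun j => by
    rw [← orbitForm_Gamma]
    exact re_inner_apply_le_of_le h3 _
  have hnf : ∀ j, 0 ≤ negDiff^[n] f j := fun j => (hP.re_inner_nonneg_left _).trans (hPf j)
  calc re ⟪gramianPartialSum n A P N x, x⟫_ℂ
      = ∑ j ∈ Finset.range N, (n.multichoose j : ℝ) * orbitForm A P x j :=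
        re_inner_gramianPartialSum_apply n A P N x
    _ ≤ ∑ j ∈ Finset.range N, (n.multichoose j : ℝ) * negDiff^[n] f j := by
        gcongr with j
        exact hPf j
    _ ≤ f 0 := sum_multichoose_mul_negDiff_iterate_le n
        (fun k hk => negDiff_iterate_nonneg hf hf₀ hnf hk) N
    _ = re ⟪H x, x⟫_ℂ := by simp [f, orbitForm]

end Gramian

theorem stmt_9_general {X Y : Type*} [NormedAddCommGroup X] [InnerProductSpace ℂ X] [CompleteSpace X]
    [NormedAddCommGroup Y] [InnerProductSpace ℂ Y] [CompleteSpace Y]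
    (n : ℕ) (A : X →L[ℂ] X) (C : X →L[ℂ] Y) (H : X →L[ℂ] X)
    (h1 : (H - adjoint A ∘L H ∘L A).IsPositive)
    (h2 : (adjoint A ∘L H ∘L A).IsPositive)
    (h3 : (Gamma A H n - adjoint C ∘L C).IsPositive) :
    ∃ G : X →L[ℂ] X, G.IsPositive ∧ (H - G).IsPositive ∧
      ∀ x, Tendsto
        (fun N => ∑ j ∈ Finset.range N,
          (Nat.choose (n + j - 1) j : ℂ) •
            ((((adjoint A) ^ j) ∘L (adjoint C ∘L C) ∘L (A ^ j)) x))
        atTop (nhds (G x)) := by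
  have hP := isPositive_adjoint_comp_self C
  obtain ⟨G, hSG, hGH, hG⟩ := exists_tendsto_of_monotone_of_le
    (monotone_gramianPartialSum hP n A) (gramianPartialSum_le hP h1 h2 h3)
  refine ⟨G, (nonneg_iff_isPositive G).1 (by simpa [gramianPartialSum] using hSG 0), hGH,
    fun x => ?_⟩
  simpa [gramianPartialSum, Nat.multichoose_eq, sum_apply] using hG x

/-- A solution of the Stein inequalities dominates the strongly convergent
`n`-observability gramian. -/
theorem stmt_9 {X Y : Type*} [NormedAddCommGroup X] [InnerProductSpace ℂ X] [CompleteSpace X]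
    [NormedAddCommGroup Y] [InnerProductSpace ℂ Y] [CompleteSpace Y]
    (n : ℕ) (hn : 1 ≤ n) (A : X →L[ℂ] X) (C : X →L[ℂ] Y) (H : X →L[ℂ] X)
    (h1 : (H - adjoint A ∘L H ∘L A).IsPositive)
    (h2 : (adjoint A ∘L H ∘L A).IsPositive)
    (h3 : (Gamma A H n - adjoint C ∘L C).IsPositive) :
    ∃ G : X →L[ℂ] X, G.IsPositive ∧ (H - G).IsPositive ∧
      ∀ x, Tendsto
        (fun N => ∑ j ∈ Finset.range N,
          (Nat.choose (n + j - 1) j : ℂ) •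
            ((((adjoint A) ^ j) ∘L (adjoint C ∘L C) ∘L (A ^ j)) x))
        atTop (nhds (G x)) :=
  stmt_9_general n A C H h1 h2 h3
end

section
/- On the weighted Bergman space A_n(Y), the shifted gramian of the model pair (E, S_n*) acts diagonally: 𝔊_{n,k,E,S_n*}: Σ_j f_j z^j ↦ Σ_j (μ_{n,j}/μ_{n,j+k}) f_j z^j, where μ_{n,j} = 1/C(j+n-1,j). Consequently 𝔊_{n,k,E,S_n*} ≥ I, so the model pair (E, S_n*) has strictly positive definite shifted gramians for all k ≥ 0. -/
/-!
The `j`-th term `S_n^j E* E S_n^{*j}` of the gramian sends `f` to `(μ_{n,j}/μ_{n,0}) f_j z^j`,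
so the series is diagonal with entries `C(j+k+n-1, j+k) μ_{n,j} = μ_{n,j}/μ_{n,j+k}`.
As `μ_{n,j}` decreases in `j`, these entries are at least `1`; they are also at most
`C(k+n-1, k)`, because `C(a+b+r, r) ≤ C(a+r, r) C(b+r, r)`, and this keeps
the right-hand series summable.
-/

/-- The weight `μ_{n,j} = 1 / C(j+n-1, j)` of the weighted Bergman space `A_n`. -/
noncomputable def mu (n j : ℕ) : ℝ := 1 / (Nat.choose (j + n - 1) j : ℝ)

/-- The `j`-th power of the adjoint Bergman shift on coefficient sequences:
`(S_n^{*j} f)_m = (μ_{n,m+j}/μ_{n,m}) f_{m+j}`. -/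
noncomputable def SstarPow {Y : Type*} [NormedAddCommGroup Y] [NormedSpace ℂ Y]
    (n j : ℕ) (f : ℕ → Y) : ℕ → Y :=
  fun m => (mu n (m + j) / mu n m) • f (m + j)

/-- The adjoint `E*` of the evaluation-at-zero operator `E : f ↦ f 0` on `A_n(Y)`. -/
def Estar {Y : Type*} [Zero Y] (y : Y) : ℕ → Y := fun m => if m = 0 then y else 0

/-- The `j`-th power of the Bergman shift (multiplication by `z^j`) on sequences. -/
def SPow {Y : Type*} [Zero Y] (j : ℕ) (f : ℕ → Y) : ℕ → Y :=
  fun m => if j ≤ m then f (m - j) else 0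

theorem Nat.choose_add_add_le_mul (a b r : ℕ) :
    (a + b + r).choose r ≤ (a + r).choose r * (b + r).choose r := by
  -- `r! C(a+r, r) = (a+1)⋯(a+r)`, and factorwise `(a+b+1+i)(i+1) ≤ (a+1+i)(b+1+i)`
  have key : (a + b + 1).ascFactorial r * r.factorial
      ≤ (a + 1).ascFactorial r * (b + 1).ascFactorial r := by
    simp only [Nat.ascFactorial_eq_prod_range, Nat.factorial_eq_prod_range_add_one,
      ← Finset.prod_mul_distrib]
    exact Finset.prod_le_prod' fun i _ => by nlinarith
  simp only [Nat.ascFactorial_eq_factorial_mul_choose] at key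
  refine Nat.le_of_mul_le_mul_left (c := r.factorial * r.factorial) ?_
    (Nat.mul_pos r.factorial_pos r.factorial_pos)
  linarith

lemma mu_succ (r j : ℕ) : mu (r + 1) j = ((j + r).choose r : ℝ)⁻¹ := by
  rw [mu, show j + (r + 1) - 1 = j + r by omega, Nat.choose_symm_add, one_div]

lemma mu_pos {n : ℕ} (hn : 1 ≤ n) (j : ℕ) : 0 < mu n j := by
  obtain ⟨r, rfl⟩ := Nat.exists_eq_add_of_le' hn
  rw [mu_succ]
  exact inv_pos.2 (by exact_mod_cast Nat.choose_pos (by omega))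

lemma mu_succ_div_mu_succ_add (r m k : ℕ) :
    mu (r + 1) m / mu (r + 1) (m + k) = ((m + k + r).choose r : ℝ) / (m + r).choose r := by
  rw [mu_succ, mu_succ, inv_div_inv]

lemma one_le_mu_div_mu_add {n : ℕ} (hn : 1 ≤ n) (m k : ℕ) : 1 ≤ mu n m / mu n (m + k) := by
  obtain ⟨r, rfl⟩ := Nat.exists_eq_add_of_le' hn
  rw [mu_succ_div_mu_succ_add, one_le_div (by exact_mod_cast Nat.choose_pos (by omega))]
  exact_mod_cast Nat.choose_le_choose r (by omega)

lemma mu_div_mu_add_le {n : ℕ} (hn : 1 ≤ n) (m k : ℕ) :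
    mu n m / mu n (m + k) ≤ (k + n - 1).choose k := by
  obtain ⟨r, rfl⟩ := Nat.exists_eq_add_of_le' hn
  rw [mu_succ_div_mu_succ_add, div_le_iff₀ (by exact_mod_cast Nat.choose_pos (by omega)),
    show k + (r + 1) - 1 = k + r by omega, Nat.choose_symm_add]
  exact_mod_cast (Nat.choose_add_add_le_mul m k r).trans_eq (mul_comm _ _)

lemma SPow_Estar_apply {Y : Type*} [Zero Y] (y : Y) (j m : ℕ) :
    SPow j (Estar y) m = if j = m then y else 0 := by
  unfold SPow Estar
  split_ifs <;> first | rfl | omega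

noncomputable def modelShiftedGramian {Y : Type*} [NormedAddCommGroup Y] [NormedSpace ℂ Y]
    (n k : ℕ) (f : ℕ → Y) (m : ℕ) : Y :=
  ∑' j : ℕ, (Nat.choose (n + j + k - 1) (j + k) : ℝ) • SPow j (Estar ((SstarPow n j f) 0)) m

lemma modelShiftedGramian_apply {Y : Type*} [NormedAddCommGroup Y] [NormedSpace ℂ Y]
    (n k : ℕ) (f : ℕ → Y) (m : ℕ) :
    modelShiftedGramian n k f m = (mu n m / mu n (m + k)) • f m := by
  simp only [modelShiftedGramian, SPow_Estar_apply, smul_ite, smul_zero, tsum_ite_eq, SstarPow,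
    zero_add, smul_smul]
  congr 1
  simp [mu, show n + m + k - 1 = m + k + n - 1 by omega]
  ring

theorem tsum_le_tsum_mul_of_one_le_of_le {ι : Type*} {w c : ι → ℝ} {C : ℝ}
    (hw : ∀ m, 0 ≤ w m) (hc₁ : ∀ m, 1 ≤ c m) (hcC : ∀ m, c m ≤ C) (hs : Summable w) :
    ∑' m, w m ≤ ∑' m, c m * w m :=
  hs.tsum_le_tsum (fun m => le_mul_of_one_le_left (hw m) (hc₁ m)) <|
    (hs.mul_left C).of_nonneg_of_le (fun m => mul_nonneg (zero_le_one.trans (hc₁ m)) (hw m))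
      fun m => mul_le_mul_of_nonneg_right (hcC m) (hw m)

theorem stmt_17_general {Y : Type*} [NormedAddCommGroup Y] [InnerProductSpace ℂ Y]
    (n k : ℕ) (hn : 1 ≤ n) :
    (∀ (f : ℕ → Y) (m : ℕ),
      (∑' j : ℕ, (Nat.choose (n + j + k - 1) (j + k) : ℝ) •
          SPow j (Estar ((SstarPow n j f) 0)) m)
        = (mu n m / mu n (m + k)) • f m) ∧
    (∀ f : ℕ → Y, Summable (fun m => mu n m * ‖f m‖ ^ 2) →
      (∑' m : ℕ, mu n m * ‖f m‖ ^ 2)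
        ≤ ∑' m : ℕ, mu n m * ((mu n m / mu n (m + k)) * ‖f m‖ ^ 2)) := by
  refine ⟨modelShiftedGramian_apply n k, fun f hf => ?_⟩
  refine (tsum_le_tsum_mul_of_one_le_of_le (fun m => mul_nonneg (mu_pos hn m).le (sq_nonneg _))
    (one_le_mu_div_mu_add hn · k) (mu_div_mu_add_le hn · k) hf).trans_eq
    (tsum_congr fun m => by ring)

/-- The shifted gramian of the model pair `(E, S_n*)` on `A_n(Y)` acts diagonally:
`𝔊_{n,k,E,S_n*} : Σ f_j z^j ↦ Σ (μ_{n,j}/μ_{n,j+k}) f_j z^j`, and consequently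
`𝔊_{n,k,E,S_n*} ≥ I` in the metric of `A_n(Y)`. -/
theorem stmt_17 {Y : Type*} [NormedAddCommGroup Y] [InnerProductSpace ℂ Y] [CompleteSpace Y]
    (n k : ℕ) (hn : 1 ≤ n) :
    (∀ (f : ℕ → Y) (m : ℕ),
      (∑' j : ℕ, (Nat.choose (n + j + k - 1) (j + k) : ℝ) •
          SPow j (Estar ((SstarPow n j f) 0)) m)
        = (mu n m / mu n (m + k)) • f m) ∧
    (∀ f : ℕ → Y, Summable (fun m => mu n m * ‖f m‖ ^ 2) →
      (∑' m : ℕ, mu n m * ‖f m‖ ^ 2)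
        ≤ ∑' m : ℕ, mu n m * ((mu n m / mu n (m + k)) * ‖f m‖ ^ 2)) :=
  stmt_17_general n k hn
end
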